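/- For an integer k ≥ 2, let H be a k-uniform hypergraph with n vertices and p·C(n,k) edges. Then there is an ordering v_1, …, v_n of the vertices such that |e({v_1,…,v_ℓ}) − p·C(ℓ,k)| ≤ max{p, 1−p}·C(n−1,k−1) for all ℓ ∈ {1,…,n}. -/

import Mathlib

/-!
Delete the vertices one at a time, starting from the whole vertex set, keeping the discrepancy
`d(S) = e(S) - p·C(|S|,k)` inside `[-(1-p)·D, p·D]`, `D = C(n-1,k-1)`; it starts at `d(V) = 0`.
Removing `v` from `S`, `|S| = m`, changes `e` by at most the degree `C(m-1,k-1)` of `v` in `S`, and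
`∑_{v ∈ S} e(S - v) = (m-k)·e(S)`, so some `v` has `m·e(S - v) ≤ (m-k)·e(S)` and some has the
reverse inequality. Since `m·C(m-1,k) = (m-k)·C(m,k)`, the first choice gives
`m·d(S - v) ≤ (m-k)·d(S)`: if `d(S) ≥ 0` it keeps `d` below `p·D`, and it cannot push `d` below
`d(S) - (1-p)·C(m-1,k-1)`. The second choice does the symmetric job when `d(S) < 0`. Listing the
vertices in the reverse order of deletion gives the required ordering.
-/

open Finset

namespace Finset

variable {α : Type*}

theorem card_le_choose_of_forall_card_eq [Fintype α] {H : Finset (Finset α)} {k : ℕ}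
    (hk : ∀ e ∈ H, #e = k) : #H ≤ (Fintype.card α).choose k := by
  rw [← card_univ, ← card_powersetCard]
  exact card_le_card fun e he => mem_powersetCard.2 ⟨subset_univ e, hk e he⟩

variable [DecidableEq α]

theorem exists_nodup_toFinset_take (P : Finset α → Prop)
    (hstep : ∀ S : Finset α, S.Nonempty → P S → ∃ v ∈ S, P (S.erase v)) (S : Finset α)
    (hS : P S) : ∃ l : List α, l.Nodup ∧ l.toFinset = S ∧ ∀ ℓ, P (l.take ℓ).toFinset := by
  induction S using Finset.strongInduction with
  | H S ih =>
  obtain rfl | hne := S.eq_empty_or_nonempty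
  · exact ⟨[], List.nodup_nil, rfl, fun ℓ => by rwa [List.take_nil]⟩
  obtain ⟨v, hv, hPv⟩ := hstep S hne hS
  obtain ⟨l, hnd, hl, htake⟩ := ih _ (erase_ssubset hv) hPv
  have hvl : v ∉ l := by simp [← List.mem_toFinset, hl]
  have hfull : (l ++ [v]).toFinset = S := by simp [hl, insert_erase hv]
  refine ⟨l ++ [v], hnd.append (List.nodup_singleton v) (by simpa using hvl), hfull, fun ℓ => ?_⟩
  rcases le_or_gt ℓ l.length with hℓ | hℓ
  · rw [List.take_append_of_le_length hℓ]
    exact htake ℓ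
  · rw [List.take_of_length_le (by simp only [List.length_append, List.length_singleton]; omega),
      hfull]
    exact hS

def inducedCount (H : Finset (Finset α)) (S : Finset α) : ℕ := #{e ∈ H | e ⊆ S}

noncomputable def discrepancy (H : Finset (Finset α)) (k : ℕ) (p : ℝ) (S : Finset α) : ℝ :=
  inducedCount H S - p * (#S).choose k

def DiscrepancyBounded (H : Finset (Finset α)) (k : ℕ) (p D : ℝ) (S : Finset α) : Prop :=
  -((1 - p) * D) ≤ discrepancy H k p S ∧ discrepancy H k p S ≤ p * D

variable {H : Finset (Finset α)} {k : ℕ} {p : ℝ} {S : Finset α} {v : α}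

theorem discrepancy_univ [Fintype α] (hk : ∀ e ∈ H, #e = k)
    (hp : p = #H / (Fintype.card α).choose k) : discrepancy H k p univ = 0 := by
  have hall : inducedCount H univ = #H := by
    rw [inducedCount, filter_true_of_mem fun e _ => subset_univ e]
  rw [discrepancy, hall, card_univ, hp]
  rcases eq_or_ne ((Fintype.card α).choose k) 0 with h0 | h0
  · have hH : #H = 0 := Nat.eq_zero_of_le_zero (h0 ▸ card_le_choose_of_forall_card_eq hk)
    simp [hH]
  · rw [div_mul_cancel₀ _ (Nat.cast_ne_zero.2 h0), sub_self]

theorem inducedCount_erase (S : Finset α) (v : α) :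
    inducedCount H (S.erase v) = #{e ∈ H | e ⊆ S ∧ v ∉ e} := by
  simp only [inducedCount, subset_erase]

theorem sum_inducedCount_erase (hk : ∀ e ∈ H, #e = k) (S : Finset α) :
    ∑ v ∈ S, inducedCount H (S.erase v) = (#S - k) * inducedCount H S := by
  calc ∑ v ∈ S, inducedCount H (S.erase v)
      = ∑ v ∈ S, ∑ e ∈ H with e ⊆ S, if v ∉ e then 1 else 0 := by
        simp only [inducedCount_erase, ← filter_filter, card_filter]
    _ = ∑ e ∈ H with e ⊆ S, #(S \ e) := by
        rw [sum_comm]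
        exact sum_congr rfl fun e _ => by rw [← card_filter, filter_notMem_eq_sdiff]
    _ = (#S - k) * inducedCount H S := by
        rw [inducedCount, mul_comm, ← smul_eq_mul, ← sum_const]
        refine sum_congr rfl fun e he => ?_
        rw [mem_filter] at he
        rw [card_sdiff_of_subset he.2, hk e he.1]

theorem sum_card_mul_inducedCount_erase (hk : ∀ e ∈ H, #e = k) (S : Finset α) :
    ∑ v ∈ S, #S * inducedCount H (S.erase v) = ∑ _v ∈ S, (#S - k) * inducedCount H S := by
  rw [← mul_sum, sum_inducedCount_erase hk, sum_const, smul_eq_mul, mul_left_comm]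

theorem exists_card_mul_inducedCount_erase_le (hk : ∀ e ∈ H, #e = k) (hS : S.Nonempty) :
    ∃ v ∈ S, #S * inducedCount H (S.erase v) ≤ (#S - k) * inducedCount H S :=
  exists_le_of_sum_le hS (sum_card_mul_inducedCount_erase hk S).le

theorem exists_le_card_mul_inducedCount_erase (hk : ∀ e ∈ H, #e = k) (hS : S.Nonempty) :
    ∃ v ∈ S, (#S - k) * inducedCount H S ≤ #S * inducedCount H (S.erase v) :=
  exists_le_of_sum_le hS (sum_card_mul_inducedCount_erase hk S).ge

theorem inducedCount_le_erase_add (hk : ∀ e ∈ H, #e = k) (hv : v ∈ S) :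
    inducedCount H S ≤ inducedCount H (S.erase v) + (#S - 1).choose (k - 1) := by
  have hlink : #{e ∈ H | e ⊆ S ∧ v ∈ e} ≤ (#S - 1).choose (k - 1) := by
    rw [← card_erase_of_mem hv, ← card_powersetCard]
    refine card_le_card_of_injOn (fun e => e.erase v) (fun e he => ?_) (fun e he e' he' h => ?_)
    · simp only [coe_filter, Set.mem_ofPred_eq] at he
      rw [mem_coe, mem_powersetCard]
      exact ⟨erase_subset_erase v he.2.1, by rw [card_erase_of_mem he.2.2, hk e he.1]⟩
    · simp only [coe_filter, Set.mem_ofPred_eq] at he he'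
      rw [← insert_erase he.2.2, ← insert_erase he'.2.2]
      exact congrArg (insert v) h
  have hsplit := card_filter_add_card_filter_not (s := {e ∈ H | e ⊆ S}) (p := fun e => v ∈ e)
  simp only [filter_filter] at hsplit
  rw [inducedCount_erase, inducedCount]
  omega

theorem inducedCount_erase_le (S : Finset α) (v : α) :
    inducedCount H (S.erase v) ≤ inducedCount H S :=
  card_le_card (monotone_filter_right _ fun _ _ he => he.trans (erase_subset v S))

theorem discrepancy_erase (hk1 : 1 ≤ k) (hv : v ∈ S) :
    discrepancy H k p (S.erase v) = discrepancy H k p S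
      - (inducedCount H S - inducedCount H (S.erase v)) + p * (#S - 1).choose (k - 1) := by
  have hpascal : (#S).choose k = (#S - 1).choose (k - 1) + (#S - 1).choose k := by
    obtain ⟨m, hm⟩ := Nat.exists_eq_add_of_lt (card_pos.2 ⟨v, hv⟩)
    obtain ⟨j, rfl⟩ := Nat.exists_eq_add_of_le' hk1
    simp [hm, Nat.choose_succ_succ]
  simp only [discrepancy, card_erase_of_mem hv, hpascal]
  push_cast
  ring

theorem card_mul_discrepancy_erase (hv : v ∈ S) :
    #S * discrepancy H k p (S.erase v) - (#S - k : ℕ) * discrepancy H k p S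
      = #S * inducedCount H (S.erase v) - (#S - k : ℕ) * inducedCount H S := by
  have h : (#S - 1).choose k * #S = (#S).choose k * (#S - k) := by
    obtain ⟨m, hm⟩ := Nat.exists_eq_add_of_lt (card_pos.2 ⟨v, hv⟩)
    simpa [hm] using Nat.choose_mul_succ_eq m k
  have h' : ((#S - 1).choose k : ℝ) * #S = (#S).choose k * (#S - k : ℕ) := by exact_mod_cast h
  simp only [discrepancy, card_erase_of_mem hv]
  linear_combination (-p) * h'

theorem DiscrepancyBounded.abs_discrepancy_le {D : ℝ} (h : DiscrepancyBounded H k p D S)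
    (hD : 0 ≤ D) : |discrepancy H k p S| ≤ max p (1 - p) * D := by
  have hp := mul_le_mul_of_nonneg_right (le_max_left p (1 - p)) hD
  have hq := mul_le_mul_of_nonneg_right (le_max_right p (1 - p)) hD
  exact abs_le.2 ⟨by linarith [h.1], h.2.trans hp⟩

theorem DiscrepancyBounded.exists_erase (hk1 : 1 ≤ k) (hk : ∀ e ∈ H, #e = k) (hp0 : 0 ≤ p)
    (hp1 : p ≤ 1) {D : ℝ} (hD : ((#S - 1).choose (k - 1) : ℝ) ≤ D) (hS : S.Nonempty)
    (h : DiscrepancyBounded H k p D S) : ∃ v ∈ S, DiscrepancyBounded H k p D (S.erase v) := by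
  obtain ⟨hlo, hhi⟩ := h
  have hm : (0 : ℝ) < #S := by exact_mod_cast hS.card_pos
  have hr : ((#S - k : ℕ) : ℝ) ≤ #S := by exact_mod_cast Nat.sub_le _ _
  have hD0 : 0 ≤ D := (Nat.cast_nonneg _).trans hD
  rcases le_or_gt 0 (discrepancy H k p S) with hpos | hneg
  · obtain ⟨v, hv, hle⟩ := exists_card_mul_inducedCount_erase_le hk hS
    have hle' : (#S * inducedCount H (S.erase v) : ℝ) ≤ (#S - k : ℕ) * inducedCount H S := by
      exact_mod_cast hle
    have hdeg : (inducedCount H S : ℝ) ≤ inducedCount H (S.erase v) + (#S - 1).choose (k - 1) := by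
      exact_mod_cast inducedCount_le_erase_add hk hv
    have hmul := card_mul_discrepancy_erase (H := H) (k := k) (p := p) hv
    have hqD : (1 - p) * ((#S - 1).choose (k - 1) : ℝ) ≤ (1 - p) * D :=
      mul_le_mul_of_nonneg_left hD (by linarith)
    have hshrink : (#S - k : ℕ) * discrepancy H k p S ≤ #S * (p * D) := calc
      _ ≤ ((#S - k : ℕ) : ℝ) * (p * D) := mul_le_mul_of_nonneg_left hhi (Nat.cast_nonneg _)
      _ ≤ #S * (p * D) := mul_le_mul_of_nonneg_right hr (mul_nonneg hp0 hD0)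
    refine ⟨v, hv, ?_, le_of_mul_le_mul_left (by linarith) hm⟩
    rw [discrepancy_erase hk1 hv]
    linarith
  · obtain ⟨v, hv, hle⟩ := exists_le_card_mul_inducedCount_erase hk hS
    have hle' : ((#S - k : ℕ) * inducedCount H S : ℝ) ≤ #S * inducedCount H (S.erase v) := by
      exact_mod_cast hle
    have hmono : (inducedCount H (S.erase v) : ℝ) ≤ inducedCount H S := by
      exact_mod_cast inducedCount_erase_le S v
    have hmul := card_mul_discrepancy_erase (H := H) (k := k) (p := p) hv
    have hpD : p * ((#S - 1).choose (k - 1) : ℝ) ≤ p * D := mul_le_mul_of_nonneg_left hD hp0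
    have hshrink : #S * -((1 - p) * D) ≤ (#S - k : ℕ) * discrepancy H k p S := calc
      _ ≤ ((#S - k : ℕ) : ℝ) * -((1 - p) * D) :=
        mul_le_mul_of_nonpos_right hr (neg_nonpos.2 (mul_nonneg (by linarith) hD0))
      _ ≤ _ := mul_le_mul_of_nonneg_left hlo (Nat.cast_nonneg _)
    refine ⟨v, hv, le_of_mul_le_mul_left (by linarith) hm, ?_⟩
    rw [discrepancy_erase hk1 hv]
    linarith

end Finset

theorem List.Nodup.exists_perm_image_val_lt {n : ℕ} (l : List (Fin n)) (hnd : l.Nodup)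
    (hmem : ∀ x, x ∈ l) : ∃ σ : Equiv.Perm (Fin n), ∀ ℓ : ℕ,
      (univ.filter fun i : Fin n => (i : ℕ) < ℓ).image σ = (l.take ℓ).toFinset := by
  have hlen : l.length = n := by
    have h := congrArg card (eq_univ_of_forall fun x => List.mem_toFinset.2 (hmem x))
    rwa [List.toFinset_card_of_nodup hnd, card_univ, Fintype.card_fin] at h
  refine ⟨(finCongr hlen.symm).trans (hnd.getEquivOfForallMemList l hmem), fun ℓ => ?_⟩
  ext x
  simp only [Equiv.coe_trans, Finset.mem_image, Finset.mem_filter, Finset.mem_univ, true_and,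
    Function.comp_apply, finCongr_apply, getEquivOfForallMemList_apply, get_eq_getElem,
    Fin.val_cast, mem_toFinset, mem_take_iff_getElem, lt_inf_iff]
  constructor
  · rintro ⟨i, hi, rfl⟩
    exact ⟨i, ⟨hi, by omega⟩, rfl⟩
  · rintro ⟨j, ⟨hjℓ, hjl⟩, rfl⟩
    exact ⟨⟨j, by omega⟩, hjℓ, rfl⟩

/-- For a `k`-uniform hypergraph with `n` vertices and edge density `p = e(H)/C(n,k)` there is
an ordering with `|e({v_1,…,v_ℓ}) − p·C(ℓ,k)| ≤ max{p, 1−p}·C(n−1,k−1)` for all `ℓ`. -/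
theorem stmt_11 (k n : ℕ) (hk2 : 2 ≤ k) (H : Finset (Finset (Fin n)))
    (hk : ∀ e ∈ H, e.card = k) (p : ℝ)
    (hp : p = (H.card : ℝ) / (n.choose k)) :
    ∃ σ : Equiv.Perm (Fin n), ∀ ℓ : ℕ, 1 ≤ ℓ → ℓ ≤ n →
      |((H.filter (fun e => e ⊆ (Finset.univ.filter (fun i : Fin n => (i : ℕ) < ℓ)).image σ)).card : ℝ)
          - p * (ℓ.choose k)| ≤ max p (1 - p) * ((n - 1).choose (k - 1)) := by
  replace hp : p = #H / (Fintype.card (Fin n)).choose k := by rwa [Fintype.card_fin]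
  have hp0 : 0 ≤ p := hp ▸ by positivity
  have hp1 : p ≤ 1 := hp ▸ div_le_one_of_le₀ (mod_cast card_le_choose_of_forall_card_eq hk)
    (Nat.cast_nonneg _)
  set D : ℝ := (((n - 1).choose (k - 1) : ℕ) : ℝ) with hD
  have hD0 : 0 ≤ D := Nat.cast_nonneg _
  have hstart : DiscrepancyBounded H k p D univ := by
    rw [DiscrepancyBounded, discrepancy_univ hk hp]
    exact ⟨neg_nonpos.2 (mul_nonneg (by linarith) hD0), mul_nonneg hp0 hD0⟩
  have hdeg (S : Finset (Fin n)) : ((#S - 1).choose (k - 1) : ℝ) ≤ D := by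
    have hS : #S ≤ n := (card_le_univ S).trans (Fintype.card_fin n).le
    rw [hD]
    exact_mod_cast Nat.choose_le_choose _ (Nat.sub_le_sub_right hS 1)
  have hstep (S : Finset (Fin n)) (hS : S.Nonempty) (h : DiscrepancyBounded H k p D S) :
      ∃ v ∈ S, DiscrepancyBounded H k p D (S.erase v) :=
    h.exists_erase (by omega) hk hp0 hp1 (hdeg S) hS
  obtain ⟨l, hnd, hl, hbounded⟩ := exists_nodup_toFinset_take _ hstep univ hstart
  obtain ⟨σ, hσ⟩ := hnd.exists_perm_image_val_lt l fun x => by simp [← List.mem_toFinset, hl]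
  refine ⟨σ, fun ℓ _ hℓ => ?_⟩
  have hcard : #((univ.filter fun i : Fin n => (i : ℕ) < ℓ).image σ) = ℓ := by
    rw [card_image_of_injective _ σ.injective, Fin.card_filter_val_lt, min_eq_right hℓ]
  have habs := (hbounded ℓ).abs_discrepancy_le hD0
  rwa [← hσ, discrepancy, hcard] at habs
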